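/- arXiv:2504.03215 — 2 statements merged into one kernel-verified Lean document; each statement's English description precedes it below -/
import Mathlib

section
/- Let c > 0, V > 0. The function P(r₂) = (c/V)·exp(−4πc·r₂³/3) satisfies, for all r₂ > 0, the steady-state equation (1/r₂²)·d/dr₂ ( r₂²·P'(r₂) + r₂⁴·P(r₂)²/Q(r₂) ) = 0, where Q(r₂) = ∫_{r₂}^∞ P(s)s² ds. -/
open Real MeasureTheory Set

/-!
With `a = 4πc`, the density is `P r = k e^{-a r³/3}` (`k = c/V`), so `P' = -a r² P`, and since
`P r · r² = -(P r)' / a` the tail integral is `Q = P / a`. Hence `r⁴ P² / Q = a r⁴ P = -r² P'`: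
the flux vanishes identically, not just its divergence.
-/

theorem sq_div_div_eq_mul {K : Type*} [Field K] (x k : K) : x ^ 2 / (x / k) = k * x := by
  rcases eq_or_ne x 0 with rfl | hx
  · simp
  rcases eq_or_ne k 0 with rfl | hk
  · simp
  field_simp

theorem hasDerivAt_exp_neg_mul_pow_three_div_three (a r : ℝ) :
    HasDerivAt (fun r => exp (-(a * r ^ 3 / 3))) (-(a * r ^ 2) * exp (-(a * r ^ 3 / 3))) r := by
  have h : HasDerivAt (fun r : ℝ => -(a * r ^ 3 / 3)) (-(a * r ^ 2)) r := by
    refine (((hasDerivAt_pow 3 r).const_mul a).div_const 3).neg.congr_deriv ?_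
    ring
  simpa only [mul_comm] using h.exp

theorem integral_Ioi_exp_neg_mul_pow_three_div_three_mul_sq {a : ℝ} (ha : 0 < a) (r : ℝ) :
    ∫ s in Ioi r, exp (-(a * s ^ 3 / 3)) * s ^ 2 = exp (-(a * r ^ 3 / 3)) / a := by
  have hderiv (s : ℝ) : HasDerivAt (fun s => -exp (-(a * s ^ 3 / 3)) / a)
      (exp (-(a * s ^ 3 / 3)) * s ^ 2) s := by
    refine ((hasDerivAt_exp_neg_mul_pow_three_div_three a s).neg.div_const a).congr_deriv ?_
    field_simp
  have hlim : Filter.Tendsto (fun s : ℝ => -exp (-(a * s ^ 3 / 3)) / a) Filter.atTop (nhds 0) := by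
    have hcube : Filter.Tendsto (fun s : ℝ => a * s ^ 3 / 3) Filter.atTop Filter.atTop :=
      ((Filter.tendsto_pow_atTop three_ne_zero).const_mul_atTop ha).atTop_div_const three_pos
    simpa using ((tendsto_exp_atBot.comp (Filter.tendsto_neg_atTop_atBot.comp hcube)).neg).div_const a
  rw [integral_Ioi_of_hasDerivAt_of_nonneg (hderiv r).continuousAt.continuousWithinAt
    (fun s _ => hderiv s) (fun s _ => by positivity) hlim]
  ring

theorem hertz_density_is_steady_state_general (c V : ℝ) (hc : 0 < c)
    (P : ℝ → ℝ) (hP : ∀ r, P r = c / V * Real.exp (-(4 * π * c * r ^ 3 / 3)))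
    (Q : ℝ → ℝ) (hQ : ∀ r, Q r = ∫ s in Ioi r, P s * s ^ 2) :
    ∀ r2 : ℝ, 0 < r2 →
      (1 / r2 ^ 2) *
        deriv (fun r => r ^ 2 * deriv P r + r ^ 4 * (P r) ^ 2 / Q r) r2 = 0 := by
  set a := 4 * π * c
  have ha : 0 < a := by positivity
  have hP' (r : ℝ) : deriv P r = -(a * r ^ 2) * P r := by
    rw [funext hP, ((hasDerivAt_exp_neg_mul_pow_three_div_three a r).const_mul (c / V)).deriv]
    beta_reduce
    ring
  have hQP (r : ℝ) : Q r = P r / a := by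
    simp_rw [hQ, hP, mul_assoc, integral_const_mul,
      integral_Ioi_exp_neg_mul_pow_three_div_three_mul_sq ha, mul_div_assoc]
  have hflux : (fun r => r ^ 2 * deriv P r + r ^ 4 * (P r) ^ 2 / Q r) = fun _ => 0 := by
    ext r
    rw [hP', hQP, mul_div_assoc, sq_div_div_eq_mul]
    ring
  intro r2 _
  simp [hflux]

theorem hertz_density_is_steady_state (c V : ℝ) (hc : 0 < c) (hV : 0 < V)
    (P : ℝ → ℝ) (hP : ∀ r, P r = c / V * Real.exp (-(4 * π * c * r ^ 3 / 3)))
    (Q : ℝ → ℝ) (hQ : ∀ r, Q r = ∫ s in Ioi r, P s * s ^ 2) :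
    ∀ r2 : ℝ, 0 < r2 →
      (1 / r2 ^ 2) *
        deriv (fun r => r ^ 2 * deriv P r + r ^ 4 * (P r) ^ 2 / Q r) r2 = 0 :=
  hertz_density_is_steady_state_general c V hc P hP Q hQ
end

section
/- Let D₁, V, σ_max, c, Γ > 0, f(r₂) = σ_max·exp(−4πΓr₂³/3), and P₀(r₁, r₂) = (c/V)·exp(−4πcr₂³/3)·(1 − f(r₂)/r₁). Then the flux integral ∫₀^∞ D₁·(∂P₀/∂r₁)(f(r₂), r₂)·4πf(r₂)²·4πr₂² dr₂ equals 4πD₁σ_max c/(V(c+Γ)); in particular ∂P₀/∂r₁ evaluated at r₁ = f(r₂) equals (c/V)·exp(−4πcr₂³/3)/f(r₂). -/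
open Real MeasureTheory Set

/-! Since `∂/∂r₁ (1 - f/r₁) = f/r₁²`, the flux at `r₁ = f` is `(c/V) e^{-4πcr₂³/3} / f`, and the area
weight `f²` turns the integrand into a multiple of `r₂² e^{-4π(c+Γ)r₂³/3}`, a Gamma-type integral
equal to `1/(4π(c+Γ))`. -/

theorem div_mul_sq_self {G₀ : Type*} [GroupWithZero G₀] (x y : G₀) : x / y * y ^ 2 = x * y := by
  rcases eq_or_ne y 0 with rfl | hy
  · simp
  · rw [sq, ← mul_assoc, div_mul_cancel₀ x hy]

-- Also at `b = 0`, where the function is constant and `A / 0 = 0`.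
theorem deriv_const_mul_one_sub_div_at_self (A b : ℝ) :
    deriv (fun r => A * (1 - b / r)) b = A / b := by
  rcases eq_or_ne b 0 with rfl | hb
  · simp
  · have h := ((hasDerivAt_inv hb).const_mul b |>.const_sub 1).const_mul A
    rw [show (fun r => A * (1 - b / r)) = fun r => A * (1 - b * r⁻¹) by simp only [div_eq_mul_inv],
      h.deriv]
    field_simp

theorem integral_pow_mul_exp_neg_mul_pow_succ (n : ℕ) {b : ℝ} (hb : 0 < b) :
    ∫ x in Ioi (0 : ℝ), x ^ n * exp (-b * x ^ (n + 1)) = 1 / ((n + 1) * b) := by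
  have h := integral_rpow_mul_exp_neg_mul_rpow (p := n + 1) (q := n) (by positivity)
    (by linarith [n.cast_nonneg (α := ℝ)]) hb
  have hn : (n + 1 : ℝ) ≠ 0 := by positivity
  rw [div_self hn, neg_div, div_self hn, Gamma_one, rpow_neg_one] at h
  simp only [rpow_natCast, ← Nat.cast_succ] at h
  rw [h]
  push_cast
  field_simp

theorem leading_order_flux_general (D₁ V σmax c Γ : ℝ)
    (hc : 0 < c) (hΓ : 0 < Γ)
    (f : ℝ → ℝ) (hf : ∀ r, f r = σmax * Real.exp (-(4 * π * Γ * r ^ 3 / 3)))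
    (P0 : ℝ → ℝ → ℝ)
    (hP0 : ∀ r1 r2, P0 r1 r2 =
      c / V * Real.exp (-(4 * π * c * r2 ^ 3 / 3)) * (1 - f r2 / r1)) :
    (∀ r2, 0 ≤ r2 →
      deriv (fun r1 => P0 r1 r2) (f r2) =
        (c / V) * Real.exp (-(4 * π * c * r2 ^ 3 / 3)) / f r2) ∧
    (∫ r2 in Ioi (0:ℝ),
        D₁ * deriv (fun r1 => P0 r1 r2) (f r2) * (4 * π * (f r2) ^ 2) * (4 * π * r2 ^ 2)) =
      4 * π * D₁ * σmax * c / (V * (c + Γ)) := by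
  have hderiv (r2 : ℝ) : deriv (fun r1 => P0 r1 r2) (f r2) =
      c / V * exp (-(4 * π * c * r2 ^ 3 / 3)) / f r2 := by
    simp only [hP0]
    exact deriv_const_mul_one_sub_div_at_self _ _
  have hflux (r2 : ℝ) :
      D₁ * deriv (fun r1 => P0 r1 r2) (f r2) * (4 * π * (f r2) ^ 2) * (4 * π * r2 ^ 2) =
        16 * π ^ 2 * D₁ * c * σmax / V *
          (r2 ^ 2 * exp (-(4 * π * (c + Γ) / 3) * r2 ^ (2 + 1))) := by
    have hexp : exp (-(4 * π * c * r2 ^ 3 / 3)) * exp (-(4 * π * Γ * r2 ^ 3 / 3)) =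
        exp (-(4 * π * (c + Γ) / 3) * r2 ^ (2 + 1)) := by
      rw [← exp_add]; ring_nf
    calc _ = 16 * π ^ 2 * D₁ * (c / V * exp (-(4 * π * c * r2 ^ 3 / 3)) / f r2 * f r2 ^ 2) *
          r2 ^ 2 := by rw [hderiv]; ring
      _ = _ := by rw [div_mul_sq_self, hf, ← hexp]; ring
  refine ⟨fun r2 _ => hderiv r2, ?_⟩
  rw [integral_congr_ae (ae_of_all _ hflux), integral_const_mul,
    integral_pow_mul_exp_neg_mul_pow_succ 2 (by positivity)]
  field_simp
  ring

theorem leading_order_flux (D₁ V σmax c Γ : ℝ)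
    (hD : 0 < D₁) (hV : 0 < V) (hσ : 0 < σmax) (hc : 0 < c) (hΓ : 0 < Γ)
    (f : ℝ → ℝ) (hf : ∀ r, f r = σmax * Real.exp (-(4 * π * Γ * r ^ 3 / 3)))
    (P0 : ℝ → ℝ → ℝ)
    (hP0 : ∀ r1 r2, P0 r1 r2 =
      c / V * Real.exp (-(4 * π * c * r2 ^ 3 / 3)) * (1 - f r2 / r1)) :
    (∀ r2, 0 ≤ r2 →
      deriv (fun r1 => P0 r1 r2) (f r2) =
        (c / V) * Real.exp (-(4 * π * c * r2 ^ 3 / 3)) / f r2) ∧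
    (∫ r2 in Ioi (0:ℝ),
        D₁ * deriv (fun r1 => P0 r1 r2) (f r2) * (4 * π * (f r2) ^ 2) * (4 * π * r2 ^ 2)) =
      4 * π * D₁ * σmax * c / (V * (c + Γ)) :=
  leading_order_flux_general D₁ V σmax c Γ hc hΓ f hf P0 hP0
end
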